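/- Let X ∈ ℝ^{n×d} be full rank with all size-s subsets full rank, d ≤ s ≤ n, and let S be drawn by size-s volume sampling. Then the matrix variance of the pseudoinverse estimator satisfies E[(I_S X)^+ ((I_S X)^+)^⊤] − E[(I_S X)^+] · E[(I_S X)^+]^⊤ = ((n−s)/(s−d+1)) · X^+ (X^+)^⊤. -/

import Mathlib

/-!
Expanding `det (Aᵀ diag(w) B)` multilinearly in its rows gives a sum over maps `φ : κ → ι` in
which only injective `φ` survive; when `w` is the indicator of `S`, the term of `φ` is counted
once for every `s`-set `S` containing the image of `φ`. Hence the Cauchy–Binet type identity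
`∑_{|S| = s} det (Aᵀ I_S B) = C(n - d, s - d) det (Aᵀ B)`.
By Cramer's rule every entry of `adj (X_Sᵀ X_S) X_Sᵀ` is such a determinant, which gives
`∑_S det (X_Sᵀ X_S) (I_S X)⁺ = C(n - d, s - d) det (Xᵀ X) X⁺`, i.e. `E[(I_S X)⁺] = X⁺`.
An entry of `adj (X_Sᵀ X_S)` is such a determinant for `X` augmented by one row that every
sample has to contain. The same count with `n + 1, s + 1` in place of `n, s`, together with
`(I_S X)⁺ ((I_S X)⁺)ᵀ = (X_Sᵀ X_S)⁻¹`, gives the second moment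
`(n - d + 1)/(s - d + 1) · X⁺ (X⁺)ᵀ`; subtracting `E[(I_S X)⁺] E[(I_S X)⁺]ᵀ = X⁺ (X⁺)ᵀ` leaves
the factor `(n - s)/(s - d + 1)`.
-/

open Matrix Finset

noncomputable section

/-- The submatrix of `X` consisting of the rows indexed by the subset `S`. -/
def rowSub {n d : ℕ} (X : Matrix (Fin n) (Fin d) ℝ) (S : Finset (Fin n)) :
    Matrix {i // i ∈ S} (Fin d) ℝ :=
  X.submatrix (fun i => (i : Fin n)) id

/-- `X_S^⊤ X_S`. -/
def gram {n d : ℕ} (X : Matrix (Fin n) (Fin d) ℝ) (S : Finset (Fin n)) :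
    Matrix (Fin d) (Fin d) ℝ :=
  (rowSub X S)ᵀ * rowSub X S

/-- The four Penrose conditions characterizing the Moore–Penrose pseudoinverse. -/
def IsMoorePenrose {m p : Type*} [Fintype m] [Fintype p]
    (A : Matrix m p ℝ) (B : Matrix p m ℝ) : Prop :=
  A * B * A = A ∧ B * A * B = B ∧ (A * B)ᵀ = A * B ∧ (B * A)ᵀ = B * A

/-- The Moore–Penrose pseudoinverse `A⁺` of a real matrix. -/
def pinv {m p : Type*} [Fintype m] [Fintype p] (A : Matrix m p ℝ) : Matrix p m ℝ := by
  classical exact if h : ∃ B, IsMoorePenrose A B then h.choose else 0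

/-- The diagonal 0/1 selection matrix `I_S`. -/
def sel {n : ℕ} (S : Finset (Fin n)) : Matrix (Fin n) (Fin n) ℝ :=
  Matrix.diagonal (fun i => if i ∈ S then 1 else 0)

section CauchyBinet

variable {ι κ R : Type*} [Fintype ι] [DecidableEq ι] [CommRing R]

theorem transpose_mul_diagonal_mul_apply (A B : Matrix ι κ R) (w : ι → R) (a b : κ) :
    (Aᵀ * diagonal w * B) a b = ∑ r, A r a * w r * B r b := by
  rw [mul_apply]
  simp [mul_diagonal]

theorem det_transpose_mul_diagonal_mul [Fintype κ] [DecidableEq κ] (A B : Matrix ι κ R)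
    (w : ι → R) :
    (Aᵀ * diagonal w * B).det =
      ∑ φ : κ → ι, (∏ k, A (φ k) k * w (φ k)) * (B.submatrix φ id).det := by
  have hrows : Aᵀ * diagonal w * B = of fun k => ∑ r, (A r k * w r) • B r := by
    ext k j
    simp [transpose_mul_diagonal_mul_apply, Finset.sum_apply]
  rw [hrows]
  exact (detRowAlternating.map_sum _).trans
    (sum_congr rfl fun φ _ => detRowAlternating.map_smul_univ _ _)

theorem card_filter_subset_powersetCard (T : Finset ι) {s : ℕ} (hT : #T ≤ s) :
    #{S ∈ powersetCard s univ | T ⊆ S} = (Fintype.card ι - #T).choose (s - #T) := by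
  rw [← card_compl T, ← card_powersetCard (s - #T) Tᶜ]
  have hdisj {U : Finset ι} (hU : U ∈ powersetCard (s - #T) Tᶜ) : Disjoint U T :=
    disjoint_compl_left.mono_left (mem_powersetCard.1 hU).1
  refine card_bij' (fun S _ => S \ T) (fun U _ => U ∪ T) (fun S hS => ?_) (fun U hU => ?_)
    (fun S hS => sdiff_union_of_subset (mem_filter.1 hS).2)
    (fun U hU => by simp [union_sdiff_right, hdisj hU])
  · simp only [mem_filter, mem_powersetCard, subset_univ, true_and] at hS
    simp [mem_powersetCard, card_sdiff_of_subset hS.2, hS.1, subset_iff]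
  · simp [mem_powersetCard, card_union_of_disjoint (hdisj hU), (mem_powersetCard.1 hU).2, hT]

theorem sum_powersetCard_det_transpose_mul_sel_mul [Fintype κ] [DecidableEq κ]
    (A B : Matrix ι κ R) {s : ℕ} (hs : Fintype.card κ ≤ s) :
    ∑ S ∈ powersetCard s (univ : Finset ι),
        (Aᵀ * diagonal (fun i => if i ∈ S then (1 : R) else 0) * B).det
      = (Fintype.card ι - Fintype.card κ).choose (s - Fintype.card κ) * (Aᵀ * B).det := by
  conv_rhs =>
    rw [← Matrix.mul_one Aᵀ, ← diagonal_one, det_transpose_mul_diagonal_mul, mul_sum]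
  simp only [det_transpose_mul_diagonal_mul, mul_one]
  rw [sum_comm]
  refine sum_congr rfl fun φ _ => ?_
  have hsel : ∀ S : Finset ι, (∏ k, A (φ k) k * if φ k ∈ S then (1 : R) else 0)
      = (if univ.image φ ⊆ S then 1 else 0) * ∏ k, A (φ k) k := by
    intro S
    rw [prod_mul_distrib, Fintype.prod_boole, mul_comm]
    simp [image_subset_iff]
  simp only [hsel, mul_assoc]
  rw [← sum_mul, sum_boole]
  by_cases hφ : Function.Injective φ
  · rw [card_filter_subset_powersetCard _ (by simpa [card_image_of_injective _ hφ] using hs),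
      card_image_of_injective _ hφ, card_univ]
  · obtain ⟨k, k', hkk', hne⟩ : ∃ k k', φ k = φ k' ∧ k ≠ k' := by
      simpa [Function.Injective] using hφ
    have hdet : (B.submatrix φ id).det = 0 := det_zero_of_row_eq hne (by ext; simp [hkk'])
    simp [hdet]

theorem adjugate_mul_mul_apply [Fintype κ] [DecidableEq κ] (C : Matrix κ ι R)
    (B : Matrix ι κ R) (k : κ) (r : ι) :
    ((C * B).adjugate * C) k r = (C * B.updateCol k (Pi.single r 1)).det := by
  have hcol : ((C * B).adjugate * C) k r = ((C * B).adjugate *ᵥ (C *ᵥ Pi.single r 1)) k := by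
    rw [mulVec_single_one]; rfl
  rw [hcol, ← cramer_eq_adjugate_mulVec, cramer_apply, mul_updateCol]

theorem sum_powersetCard_adjugate_mul_transpose_mul_sel [Fintype κ] [DecidableEq κ]
    (A B : Matrix ι κ R) {s : ℕ} (hs : Fintype.card κ ≤ s) :
    ∑ S ∈ powersetCard s (univ : Finset ι),
        (Aᵀ * diagonal (fun i => if i ∈ S then (1 : R) else 0) * B).adjugate *
          (Aᵀ * diagonal (fun i => if i ∈ S then (1 : R) else 0))
      = ((Fintype.card ι - Fintype.card κ).choose (s - Fintype.card κ) : R) •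
          ((Aᵀ * B).adjugate * Aᵀ) := by
  ext k r
  simp only [Matrix.sum_apply, Matrix.smul_apply, adjugate_mul_mul_apply, smul_eq_mul]
  exact sum_powersetCard_det_transpose_mul_sel_mul A (B.updateCol k (Pi.single r 1)) hs

theorem sum_powersetCard_succ_ite_inr_mem {M : Type*} [AddCommMonoid M] (g : Finset ι → M)
    (s : ℕ) :
    ∑ S ∈ powersetCard (s + 1) (univ : Finset (ι ⊕ Unit)),
        (if Sum.inr () ∈ S then g S.toLeft else 0) = ∑ S ∈ powersetCard s univ, g S := by
  rw [← sum_filter]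
  have hright {S : Finset (ι ⊕ Unit)} (hS : Sum.inr () ∈ S) : S.toRight = univ :=
    eq_univ_of_forall fun _ => mem_toRight.2 hS
  refine sum_nbij' toLeft (fun S => S.disjSum univ) (fun S hS => ?_)
    (fun S hS => by simp_all [card_disjSum])
    (fun S hS => by rw [← hright (mem_filter.1 hS).2, toLeft_disjSum_toRight])
    (fun S _ => toLeft_disjSum) (fun S _ => rfl)
  have hcard := card_toLeft_add_card_toRight (u := S)
  simp_all

theorem transpose_fromRows_mul_diagonal_mul_fromRows [DecidableEq κ] (A B : Matrix ι κ R)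
    (j k : κ) (S : Finset (ι ⊕ Unit)) :
    (fromRows (A.updateCol j 0) (replicateRow Unit (Pi.single j 1)))ᵀ *
        diagonal (fun x => if x ∈ S then (1 : R) else 0) *
        fromRows B (replicateRow Unit (Pi.single k 1))
      = (Aᵀ * diagonal (fun i => if i ∈ S.toLeft then (1 : R) else 0) * B).updateRow j
          ((if Sum.inr () ∈ S then 1 else 0) • Pi.single k 1) := by
  ext a b
  simp only [transpose_mul_diagonal_mul_apply, Fintype.sum_sum_type]
  rcases eq_or_ne a j with rfl | ha
  · by_cases h : Sum.inr () ∈ S <;> simp [h]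
  · simp [ha, transpose_mul_diagonal_mul_apply]

theorem sum_powersetCard_adjugate_transpose_mul_sel_mul [Fintype κ] [DecidableEq κ]
    (A B : Matrix ι κ R) {s : ℕ} (hs : Fintype.card κ ≤ s + 1) :
    ∑ S ∈ powersetCard s (univ : Finset ι),
        (Aᵀ * diagonal (fun i => if i ∈ S then (1 : R) else 0) * B).adjugate
      = ((Fintype.card ι + 1 - Fintype.card κ).choose (s + 1 - Fintype.card κ) : R) •
          (Aᵀ * B).adjugate := by
  ext k j
  set A' := fromRows (A.updateCol j 0) (replicateRow Unit (Pi.single j (1 : R)))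
  set B' := fromRows B (replicateRow Unit (Pi.single k (1 : R)))
  have hdet : ∀ S : Finset (ι ⊕ Unit),
      (A'ᵀ * diagonal (fun x => if x ∈ S then (1 : R) else 0) * B').det
        = if Sum.inr () ∈ S then
            (Aᵀ * diagonal (fun i => if i ∈ S.toLeft then (1 : R) else 0) * B).adjugate k j
          else 0 := by
    intro S
    rw [transpose_fromRows_mul_diagonal_mul_fromRows]
    split_ifs with h
    · simp [adjugate_apply]
    · exact det_eq_zero_of_row_eq_zero j (by simp)
  have hsum := sum_powersetCard_det_transpose_mul_sel_mul A' B' (s := s + 1) (by simpa using hs)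
  have huniv := hdet univ
  simp only [mem_univ, if_true, diagonal_one, Matrix.mul_one] at huniv
  simp only [hdet, huniv] at hsum
  rw [sum_powersetCard_succ_ite_inr_mem (fun S : Finset ι =>
    (Aᵀ * diagonal (fun i => if i ∈ S then (1 : R) else 0) * B).adjugate k j)] at hsum
  simpa [Matrix.sum_apply] using hsum

end CauchyBinet

theorem det_smul_nonsing_inv {n R : Type*} [Fintype n] [DecidableEq n] [CommRing R]
    (M : Matrix n n R) (hM : IsUnit M.det) : M.det • M⁻¹ = M.adjugate := by
  rw [nonsing_inv_apply _ hM, smul_smul, hM.mul_val_inv, one_smul]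

theorem isUnit_det_of_rank_eq {n K : Type*} [Fintype n] [DecidableEq n] [Field K]
    (M : Matrix n n K) (hM : M.rank = Fintype.card n) : IsUnit M.det := by
  have hrange : LinearMap.range M.mulVecLin = ⊤ :=
    Submodule.eq_top_of_finrank_eq (by rw [Module.finrank_fintype_fun_eq_card]; exact hM)
  exact (isUnit_iff_isUnit_det M).1 <|
    mulVec_surjective_iff_isUnit.1 (LinearMap.range_eq_top.1 hrange)

section MoorePenrose

variable {m p : Type*} [Fintype m] [Fintype p]

theorem IsMoorePenrose.unique {A : Matrix m p ℝ} {B C : Matrix p m ℝ}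
    (hB : IsMoorePenrose A B) (hC : IsMoorePenrose A C) : B = C := by
  obtain ⟨hB₁, hB₂, hB₃, hB₄⟩ := hB
  obtain ⟨hC₁, hC₂, hC₃, hC₄⟩ := hC
  have hAB : A * B = A * C :=
    calc A * B = (A * C * A) * B := by rw [hC₁]
      _ = (A * C)ᵀ * (A * B)ᵀ := by rw [hC₃, hB₃, Matrix.mul_assoc]
      _ = (A * B * A * C)ᵀ := by simp only [transpose_mul, Matrix.mul_assoc]
      _ = A * C := by rw [hB₁, hC₃]
  have hBA : B * A = C * A :=
    calc B * A = B * (A * C * A) := by rw [hC₁]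
      _ = (B * A)ᵀ * (C * A)ᵀ := by rw [hB₄, hC₄, Matrix.mul_assoc, Matrix.mul_assoc]
      _ = (C * (A * B * A))ᵀ := by simp only [transpose_mul, Matrix.mul_assoc]
      _ = C * A := by rw [hB₁, hC₄]
  calc B = B * A * B := hB₂.symm
    _ = C * A * C := by rw [Matrix.mul_assoc, hAB, ← Matrix.mul_assoc, hBA]
    _ = C := hC₂

theorem pinv_eq_of_isMoorePenrose {A : Matrix m p ℝ} {B : Matrix p m ℝ}
    (h : IsMoorePenrose A B) : pinv A = B := by
  rw [pinv, dif_pos ⟨B, h⟩]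
  exact (Exists.choose_spec ⟨B, h⟩).unique h

variable [DecidableEq p]

theorem transpose_inv_transpose_mul_self (A : Matrix m p ℝ) :
    ((Aᵀ * A)⁻¹)ᵀ = (Aᵀ * A)⁻¹ := by
  rw [transpose_nonsing_inv, transpose_mul, transpose_transpose]

theorem isMoorePenrose_inv_transpose_mul_self_mul_transpose {A : Matrix m p ℝ}
    (hA : IsUnit (Aᵀ * A).det) : IsMoorePenrose A ((Aᵀ * A)⁻¹ * Aᵀ) := by
  have hinv : (Aᵀ * A)⁻¹ * (Aᵀ * A) = 1 := nonsing_inv_mul _ hA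
  refine ⟨?_, ?_, ?_, ?_⟩
  · rw [Matrix.mul_assoc, Matrix.mul_assoc, hinv, Matrix.mul_one]
  · rw [Matrix.mul_assoc _ Aᵀ A, hinv, Matrix.one_mul]
  · rw [transpose_mul, transpose_mul, transpose_transpose, transpose_inv_transpose_mul_self,
      Matrix.mul_assoc]
  · rw [Matrix.mul_assoc, hinv, transpose_one]

theorem pinv_eq_of_isUnit_det {A : Matrix m p ℝ} (hA : IsUnit (Aᵀ * A).det) :
    pinv A = (Aᵀ * A)⁻¹ * Aᵀ :=
  pinv_eq_of_isMoorePenrose (isMoorePenrose_inv_transpose_mul_self_mul_transpose hA)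

theorem pinv_mul_pinv_transpose {A : Matrix m p ℝ} (hA : IsUnit (Aᵀ * A).det) :
    pinv A * (pinv A)ᵀ = (Aᵀ * A)⁻¹ := by
  rw [pinv_eq_of_isUnit_det hA, transpose_mul, transpose_transpose,
    transpose_inv_transpose_mul_self]
  calc (Aᵀ * A)⁻¹ * Aᵀ * (A * (Aᵀ * A)⁻¹) = (Aᵀ * A)⁻¹ * (Aᵀ * A) * (Aᵀ * A)⁻¹ := by
        simp only [Matrix.mul_assoc]
    _ = (Aᵀ * A)⁻¹ := by rw [nonsing_inv_mul _ hA, Matrix.one_mul]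

theorem det_smul_pinv {A : Matrix m p ℝ} (hA : IsUnit (Aᵀ * A).det) :
    (Aᵀ * A).det • pinv A = (Aᵀ * A).adjugate * Aᵀ := by
  rw [pinv_eq_of_isUnit_det hA, ← Matrix.smul_mul, det_smul_nonsing_inv _ hA]

theorem det_smul_pinv_mul_pinv_transpose {A : Matrix m p ℝ} (hA : IsUnit (Aᵀ * A).det) :
    (Aᵀ * A).det • (pinv A * (pinv A)ᵀ) = (Aᵀ * A).adjugate := by
  rw [pinv_mul_pinv_transpose hA, det_smul_nonsing_inv _ hA]

end MoorePenrose

section VolumeSampling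

variable {n d : ℕ}

theorem transpose_sel (S : Finset (Fin n)) : (sel S)ᵀ = sel S :=
  diagonal_transpose _

theorem gram_eq_transpose_mul_sel_mul (X : Matrix (Fin n) (Fin d) ℝ) (S : Finset (Fin n)) :
    gram X S = Xᵀ * sel S * X := by
  ext a b
  rw [sel, transpose_mul_diagonal_mul_apply, _root_.gram, mul_apply]
  simp only [rowSub, transpose_apply, submatrix_apply, id, mul_ite, ite_mul, mul_one, zero_mul,
    mul_zero]
  rw [sum_ite_mem, univ_inter]
  exact sum_coe_sort S (fun i => X i a * X i b)

theorem transpose_sel_mul_mul_sel_mul (X : Matrix (Fin n) (Fin d) ℝ) (S : Finset (Fin n)) :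
    (sel S * X)ᵀ * (sel S * X) = Xᵀ * sel S * X := by
  have hidem : sel S * sel S = sel S := by
    simp only [sel, diagonal_mul_diagonal, mul_ite, mul_one, mul_zero]
    congr with i
    split_ifs <;> rfl
  rw [transpose_mul, transpose_sel, Matrix.mul_assoc, ← Matrix.mul_assoc (sel S), hidem,
    Matrix.mul_assoc]

theorem isUnit_det_gram_sel_mul (X : Matrix (Fin n) (Fin d) ℝ) {S : Finset (Fin n)}
    (hS : (gram X S).det ≠ 0) : IsUnit ((sel S * X)ᵀ * (sel S * X)).det := by
  rw [transpose_sel_mul_mul_sel_mul, ← gram_eq_transpose_mul_sel_mul]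
  exact hS.isUnit

theorem sum_det_gram_smul_pinv (X : Matrix (Fin n) (Fin d) ℝ) (hX : IsUnit (Xᵀ * X).det)
    {s : ℕ} (hds : d ≤ s) (hfull : ∀ S ∈ powersetCard s univ, (gram X S).det ≠ 0) :
    ∑ S ∈ powersetCard s univ, (gram X S).det • pinv (sel S * X)
      = (((n - d).choose (s - d) : ℝ) * (Xᵀ * X).det) • pinv X := by
  have hsum := sum_powersetCard_adjugate_mul_transpose_mul_sel X X (s := s) (by simpa using hds)
  rw [Fintype.card_fin, Fintype.card_fin] at hsum
  calc ∑ S ∈ powersetCard s univ, (gram X S).det • pinv (sel S * X)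
      = ∑ S ∈ powersetCard s (univ : Finset (Fin n)),
          (Xᵀ * sel S * X).adjugate * (Xᵀ * sel S) := by
        refine sum_congr rfl fun S hS => ?_
        rw [gram_eq_transpose_mul_sel_mul, ← transpose_sel_mul_mul_sel_mul,
          det_smul_pinv (isUnit_det_gram_sel_mul X (hfull S hS)), transpose_sel_mul_mul_sel_mul,
          transpose_mul, transpose_sel]
    _ = ((n - d).choose (s - d) : ℝ) • ((Xᵀ * X).adjugate * Xᵀ) := hsum
    _ = _ := by rw [← det_smul_pinv hX, smul_smul]

theorem sum_det_gram_smul_pinv_mul_pinv_transpose (X : Matrix (Fin n) (Fin d) ℝ)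
    (hX : IsUnit (Xᵀ * X).det) {s : ℕ} (hds : d ≤ s + 1)
    (hfull : ∀ S ∈ powersetCard s univ, (gram X S).det ≠ 0) :
    ∑ S ∈ powersetCard s univ, (gram X S).det • (pinv (sel S * X) * (pinv (sel S * X))ᵀ)
      = (((n + 1 - d).choose (s + 1 - d) : ℝ) * (Xᵀ * X).det) • (pinv X * (pinv X)ᵀ) := by
  have hsum := sum_powersetCard_adjugate_transpose_mul_sel_mul X X (s := s) (by simpa using hds)
  rw [Fintype.card_fin, Fintype.card_fin] at hsum
  calc ∑ S ∈ powersetCard s univ, (gram X S).det • (pinv (sel S * X) * (pinv (sel S * X))ᵀ)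
      = ∑ S ∈ powersetCard s (univ : Finset (Fin n)), (Xᵀ * sel S * X).adjugate := by
        refine sum_congr rfl fun S hS => ?_
        rw [gram_eq_transpose_mul_sel_mul, ← transpose_sel_mul_mul_sel_mul,
          det_smul_pinv_mul_pinv_transpose (isUnit_det_gram_sel_mul X (hfull S hS))]
    _ = ((n + 1 - d).choose (s + 1 - d) : ℝ) • (Xᵀ * X).adjugate := hsum
    _ = _ := by rw [← det_smul_pinv_mul_pinv_transpose hX, smul_smul]

end VolumeSampling

theorem cast_choose_succ_sub_mul {n d s : ℕ} (hds : d ≤ s) (hsn : s ≤ n) :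
    ((n + 1 - d).choose (s + 1 - d) : ℝ) * ((s : ℝ) - d + 1)
      = ((n - d).choose (s - d) : ℝ) * ((n : ℝ) - d + 1) := by
  have h := congrArg (Nat.cast : ℕ → ℝ) (Nat.add_one_mul_choose_eq (n - d) (s - d))
  rw [show n + 1 - d = n - d + 1 by omega, show s + 1 - d = s - d + 1 by omega]
  push_cast [Nat.cast_sub hds, Nat.cast_sub (hds.trans hsn)] at h
  linarith

theorem volume_sampling_pinv_variance_general {n d : ℕ} (X : Matrix (Fin n) (Fin d) ℝ)
    (hrank : X.rank = d) (s : ℕ) (hds : d ≤ s) (hsn : s ≤ n)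
    (hfull : ∀ S ∈ Finset.powersetCard s (Finset.univ : Finset (Fin n)),
      (gram X S).det ≠ 0) :
    (∑ S ∈ Finset.powersetCard s (Finset.univ : Finset (Fin n)),
        ((gram X S).det / (((n - d).choose (s - d) : ℝ) * (Xᵀ * X).det)) •
          (pinv (sel S * X) * (pinv (sel S * X))ᵀ))
      - (∑ S ∈ Finset.powersetCard s (Finset.univ : Finset (Fin n)),
          ((gram X S).det / (((n - d).choose (s - d) : ℝ) * (Xᵀ * X).det)) •
            pinv (sel S * X))
        * (∑ S ∈ Finset.powersetCard s (Finset.univ : Finset (Fin n)),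
            ((gram X S).det / (((n - d).choose (s - d) : ℝ) * (Xᵀ * X).det)) •
              pinv (sel S * X))ᵀ
      = (((n : ℝ) - s) / ((s : ℝ) - d + 1)) • (pinv X * (pinv X)ᵀ) := by
  have hX : IsUnit (Xᵀ * X).det :=
    isUnit_det_of_rank_eq _ (by rw [rank_transpose_mul_self, hrank, Fintype.card_fin])
  have hc : ((n - d).choose (s - d) : ℝ) ≠ 0 :=
    Nat.cast_ne_zero.2 (Nat.choose_pos (by omega)).ne'
  have hnormalize : ∀ {k : ℕ} (M : Finset (Fin n) → Matrix (Fin d) (Fin k) ℝ),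
      ∑ S ∈ powersetCard s univ,
          ((gram X S).det / (((n - d).choose (s - d) : ℝ) * (Xᵀ * X).det)) • M S
        = (((n - d).choose (s - d) : ℝ) * (Xᵀ * X).det)⁻¹ •
            ∑ S ∈ powersetCard s univ, (gram X S).det • M S := by
    intro k M
    simp only [smul_sum, smul_smul, div_eq_inv_mul]
  rw [hnormalize (fun S => pinv (sel S * X) * (pinv (sel S * X))ᵀ),
    hnormalize (fun S => pinv (sel S * X)), sum_det_gram_smul_pinv X hX hds hfull,
    sum_det_gram_smul_pinv_mul_pinv_transpose X hX (by omega) hfull, smul_smul, smul_smul,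
    inv_mul_cancel₀ (mul_ne_zero hc hX.ne_zero), one_smul]
  have hratio : (((n - d).choose (s - d) : ℝ) * (Xᵀ * X).det)⁻¹ *
      (((n + 1 - d).choose (s + 1 - d) : ℝ) * (Xᵀ * X).det) - 1
        = ((n : ℝ) - s) / ((s : ℝ) - d + 1) := by
    have hsd : (s : ℝ) - d + 1 ≠ 0 := by
      have : (d : ℝ) ≤ s := by exact_mod_cast hds
      linarith
    have hg : (Xᵀ * X).det ≠ 0 := hX.ne_zero
    field_simp
    linear_combination cast_choose_succ_sub_mul hds hsn
  rw [← hratio, sub_smul, one_smul]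

/-- Matrix variance of the pseudoinverse estimator under size-`s` volume sampling:
`E[(I_S X)⁺((I_S X)⁺)^⊤] − E[(I_S X)⁺] E[(I_S X)⁺]^⊤ = ((n−s)/(s−d+1)) X⁺(X⁺)^⊤`. -/
theorem volume_sampling_pinv_variance {n d : ℕ} (X : Matrix (Fin n) (Fin d) ℝ)
    (hrank : X.rank = d) (hdn : d ≤ n) (s : ℕ) (hds : d ≤ s) (hsn : s ≤ n)
    (hfull : ∀ S ∈ Finset.powersetCard s (Finset.univ : Finset (Fin n)),
      (gram X S).det ≠ 0) :
    (∑ S ∈ Finset.powersetCard s (Finset.univ : Finset (Fin n)),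
        ((gram X S).det / (((n - d).choose (s - d) : ℝ) * (Xᵀ * X).det)) •
          (pinv (sel S * X) * (pinv (sel S * X))ᵀ))
      - (∑ S ∈ Finset.powersetCard s (Finset.univ : Finset (Fin n)),
          ((gram X S).det / (((n - d).choose (s - d) : ℝ) * (Xᵀ * X).det)) •
            pinv (sel S * X))
        * (∑ S ∈ Finset.powersetCard s (Finset.univ : Finset (Fin n)),
            ((gram X S).det / (((n - d).choose (s - d) : ℝ) * (Xᵀ * X).det)) •
              pinv (sel S * X))ᵀ
      = (((n : ℝ) - s) / ((s : ℝ) - d + 1)) • (pinv X * (pinv X)ᵀ) :=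
  volume_sampling_pinv_variance_general X hrank s hds hsn hfull
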